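/- Let σ, c, π > 0, T > 0, and let v(t,x) = Φ(−x/(σ√(T−t))) + Φ((x − cπ(T−t))/(σ√(T−t)))·exp(−cπx/σ² + π²c²(T−t)/(2σ²)) for t < T. Then v(t,x) > 0 for all (t,x) ∈ [0,T) × ℝ, and hence α(t,x) := −(σ²/c)·(∂_x v)/(v) is well defined; moreover 0 ≤ α(t,x) ≤ π for all (t,x) ∈ [0,T) × ℝ. -/

import Mathlib

/-!
Write `v(t, ·) = Φ(-x/s) + Φ((x - a)/s) · E(x)` with `s = σ√(T-t)`, `a = cπ(T-t)` and
`E(x) = exp(-a x/s² + a²/(2s²))`. Completing the square gives `φ((x - a)/s) · E(x) = φ(x/s)`,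
so the two density terms of `∂ₓv` cancel and `∂ₓv = -(a/s²) Φ((x - a)/s) E(x)`. Since
`a/s² = cπ/σ²`, this makes `α = π · B/(A + B)` with `A = Φ(-x/s) > 0` and `B = Φ((x - a)/s) E(x) > 0`.
-/

open Set Real

/-- The standard normal cumulative distribution function. -/
noncomputable def stdNormalCDF (x : ℝ) : ℝ :=
  ∫ y in Set.Iic x, Real.exp (-y ^ 2 / 2) / Real.sqrt (2 * π)

open MeasureTheory

noncomputable def stdNormalPDF (x : ℝ) : ℝ := exp (-x ^ 2 / 2) / sqrt (2 * π)

lemma stdNormalPDF_pos (x : ℝ) : 0 < stdNormalPDF x := by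
  unfold stdNormalPDF
  positivity

lemma stdNormalPDF_neg (x : ℝ) : stdNormalPDF (-x) = stdNormalPDF x := by
  simp only [stdNormalPDF, neg_sq]

lemma continuous_stdNormalPDF : Continuous stdNormalPDF := by
  unfold stdNormalPDF
  fun_prop

lemma integrable_stdNormalPDF : Integrable stdNormalPDF := by
  have h : stdNormalPDF = fun x => exp (-(1 / 2) * x ^ 2) / sqrt (2 * π) := by
    funext x
    unfold stdNormalPDF
    ring_nf
  rw [h]
  exact (integrable_exp_neg_mul_sq (by norm_num)).div_const _

lemma stdNormalCDF_eq_add_intervalIntegral (x : ℝ) :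
    stdNormalCDF x = stdNormalCDF 0 + ∫ y in (0 : ℝ)..x, stdNormalPDF y := by
  rw [intervalIntegral.integral_Iic_sub_Iic integrable_stdNormalPDF.integrableOn
    integrable_stdNormalPDF.integrableOn |>.symm]
  simp only [stdNormalCDF, stdNormalPDF, add_sub_cancel]

lemma hasDerivAt_stdNormalCDF (x : ℝ) : HasDerivAt stdNormalCDF (stdNormalPDF x) x := by
  rw [funext stdNormalCDF_eq_add_intervalIntegral]
  exact (intervalIntegral.integral_hasDerivAt_right integrable_stdNormalPDF.intervalIntegrable
    (continuous_stdNormalPDF.stronglyMeasurableAtFilter _ _)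
    continuous_stdNormalPDF.continuousAt).const_add _

lemma stdNormalCDF_pos (x : ℝ) : 0 < stdNormalCDF x := by
  change 0 < ∫ y in Iic x, stdNormalPDF y
  rw [setIntegral_pos_iff_support_of_nonneg_ae
    (Filter.Eventually.of_forall fun y => (stdNormalPDF_pos y).le)
    integrable_stdNormalPDF.integrableOn,
    Function.support_eq_univ fun y => (stdNormalPDF_pos y).ne', univ_inter]
  simp [volume_Iic]

lemma stdNormalPDF_shift_mul_exp (a s x : ℝ) (hs : s ≠ 0) :
    stdNormalPDF ((x - a) / s) * exp (-(a * x) / s ^ 2 + a ^ 2 / (2 * s ^ 2)) =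
      stdNormalPDF (x / s) := by
  simp only [stdNormalPDF, div_mul_eq_mul_div, ← exp_add]
  congr 2
  field_simp
  ring

/-- The solution `v(t, ·)` at time to maturity `τ`, written with `a = cπτ` and `s = σ√τ`. -/
noncomputable def hopfColeSolution (a s x : ℝ) : ℝ :=
  stdNormalCDF (-x / s) +
    stdNormalCDF ((x - a) / s) * exp (-(a * x) / s ^ 2 + a ^ 2 / (2 * s ^ 2))

lemma hopfColeSolution_pos (a s x : ℝ) : 0 < hopfColeSolution a s x := by
  unfold hopfColeSolution
  have := stdNormalCDF_pos (-x / s)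
  have := stdNormalCDF_pos ((x - a) / s)
  positivity

lemma hasDerivAt_hopfColeSolution (a s x : ℝ) (hs : s ≠ 0) :
    HasDerivAt (hopfColeSolution a s)
      (-(a / s ^ 2) * (stdNormalCDF ((x - a) / s) *
        exp (-(a * x) / s ^ 2 + a ^ 2 / (2 * s ^ 2)))) x := by
  have hA : HasDerivAt (fun y => stdNormalCDF (-y / s)) (stdNormalPDF (-x / s) * (-1 / s)) x :=
    (hasDerivAt_stdNormalCDF _).comp x (by simpa using (hasDerivAt_id x).neg.div_const s)
  have hΦ : HasDerivAt (fun y => stdNormalCDF ((y - a) / s))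
      (stdNormalPDF ((x - a) / s) * (1 / s)) x :=
    (hasDerivAt_stdNormalCDF _).comp x
      (by simpa using ((hasDerivAt_id x).sub_const a).div_const s)
  have hexponent : HasDerivAt (fun y => -(a * y) / s ^ 2 + a ^ 2 / (2 * s ^ 2)) (-a / s ^ 2) x := by
    simpa using (((hasDerivAt_id x).const_mul a).neg.div_const (s ^ 2)).add_const
      (a ^ 2 / (2 * s ^ 2))
  have hE : HasDerivAt (fun y => exp (-(a * y) / s ^ 2 + a ^ 2 / (2 * s ^ 2)))
      (exp (-(a * x) / s ^ 2 + a ^ 2 / (2 * s ^ 2)) * (-a / s ^ 2)) x :=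
    (hasDerivAt_exp _).comp x hexponent
  refine (hA.add (hΦ.mul hE)).congr_deriv ?_
  have hcancel := stdNormalPDF_shift_mul_exp a s x hs
  rw [neg_div, stdNormalPDF_neg]
  linear_combination (1 / s) * hcancel

lemma mul_div_add_mem_Icc {p A B : ℝ} (hp : 0 ≤ p) (hA : 0 < A) (hB : 0 < B) :
    p * B / (A + B) ∈ Icc 0 p := by
  refine ⟨by positivity, ?_⟩
  rw [div_le_iff₀ (by positivity)]
  nlinarith

theorem allowance_price_bounds_general
    (σ c pen T : ℝ) (hσ : 0 < σ) (hc : 0 < c) (hpen : 0 < pen)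
    (v : ℝ → ℝ → ℝ)
    (hv : ∀ t < T, ∀ x : ℝ,
      v t x = stdNormalCDF (-x / (σ * Real.sqrt (T - t)))
        + stdNormalCDF ((x - c * pen * (T - t)) / (σ * Real.sqrt (T - t)))
          * Real.exp (-(c * pen * x) / σ ^ 2 + pen ^ 2 * c ^ 2 * (T - t) / (2 * σ ^ 2)))
    (α : ℝ → ℝ → ℝ)
    (hα : ∀ t x, α t x = -(σ ^ 2 / c) * deriv (fun y => v t y) x / v t x) :
    ∀ t ∈ Ico 0 T, ∀ x : ℝ,
      0 < v t x ∧ 0 ≤ α t x ∧ α t x ≤ pen := by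
  intro t ht x
  have hτ : 0 < T - t := sub_pos.2 ht.2
  set a := c * pen * (T - t)
  set s := σ * sqrt (T - t)
  have hs : 0 < s := mul_pos hσ (sqrt_pos.2 hτ)
  have hs2 : s ^ 2 = σ ^ 2 * (T - t) := by rw [mul_pow, sq_sqrt hτ.le]
  have hvt : (fun y => v t y) = hopfColeSolution a s := by
    funext y
    rw [hv t ht.2, hopfColeSolution, hs2]
    congr 3
    field_simp [a, hσ.ne', hτ.ne']
    ring
  have hvx : v t x = hopfColeSolution a s x := congrFun hvt x
  have hα' : α t x = pen * (stdNormalCDF ((x - a) / s) *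
      exp (-(a * x) / s ^ 2 + a ^ 2 / (2 * s ^ 2))) / hopfColeSolution a s x := by
    rw [hα, hvx, hvt, (hasDerivAt_hopfColeSolution a s x hs.ne').deriv, hs2]
    simp only [a]
    field_simp
  refine ⟨hvx ▸ hopfColeSolution_pos a s x, hα' ▸ mul_div_add_mem_Icc hpen.le ?_ ?_⟩
  · exact stdNormalCDF_pos _
  · exact mul_pos (stdNormalCDF_pos _) (exp_pos _)

/-- positivity of the explicit heat-equation solution `v`, and the
bounds `0 ≤ α ≤ π` for the Hopf–Cole allowance price
`α(t,x) = −(σ²/c)·(∂_x v)/v` on `[0,T) × ℝ`. -/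
theorem allowance_price_bounds
    (σ c pen T : ℝ) (hσ : 0 < σ) (hc : 0 < c) (hpen : 0 < pen) (hT : 0 < T)
    (v : ℝ → ℝ → ℝ)
    (hv : ∀ t < T, ∀ x : ℝ,
      v t x = stdNormalCDF (-x / (σ * Real.sqrt (T - t)))
        + stdNormalCDF ((x - c * pen * (T - t)) / (σ * Real.sqrt (T - t)))
          * Real.exp (-(c * pen * x) / σ ^ 2 + pen ^ 2 * c ^ 2 * (T - t) / (2 * σ ^ 2)))
    (α : ℝ → ℝ → ℝ)
    (hα : ∀ t x, α t x = -(σ ^ 2 / c) * deriv (fun y => v t y) x / v t x) :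
    ∀ t ∈ Ico 0 T, ∀ x : ℝ,
      0 < v t x ∧ 0 ≤ α t x ∧ α t x ≤ pen :=
  allowance_price_bounds_general σ c pen T hσ hc hpen v hv α hα
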